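/- arXiv:2107.10442 — 3 statements merged into one kernel-verified Lean document; each statement's English description precedes it below -/
import Mathlib

section
/- For every a ∈ [1, ∞] there exists a constant A > 0 such that liminf_{n→∞} ‖ψ²(·) cos((33/24)·2ⁿ ·)‖_{L^a(ℝ)} ≥ A, i.e. the L^a norms of the functions x ↦ ψ(x)² cos((33/24)·2ⁿ x) stay bounded below by A for all sufficiently large n. -/
open MeasureTheory Filter Real
open scoped ENNReal

noncomputable def psi (ψhat : ℝ → ℝ) : ℝ → ℝ :=
  fun x => (1 / (2 * π)) * ∫ ξ : ℝ, ψhat ξ * Real.cos (x * ξ)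

def IsPsiHat (ψhat : ℝ → ℝ) : Prop :=
  ContDiff ℝ (⊤ : ℕ∞) ψhat ∧
  (∀ ξ, ψhat (-ξ) = ψhat ξ) ∧
  (∀ ξ, 0 ≤ ψhat ξ) ∧
  (∀ ξ, ψhat ξ ≤ 1) ∧
  (∀ ξ : ℝ, 1 / 2 < |ξ| → ψhat ξ = 0) ∧
  (∀ ξ : ℝ, |ξ| ≤ 1 / 4 → ψhat ξ = 1)

lemma psihat_hcs {ψhat : ℝ → ℝ} (h : IsPsiHat ψhat) : HasCompactSupport ψhat := by
  refine HasCompactSupport.intro (isCompact_Icc (a := (-(1/2):ℝ)) (b := 1/2)) ?_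
  intro x hx
  apply h.2.2.2.2.1
  by_contra hc
  push_neg at hc
  exact hx ⟨(abs_le.mp hc).1, (abs_le.mp hc).2⟩

lemma psihat_integrable {ψhat : ℝ → ℝ} (h : IsPsiHat ψhat) : Integrable ψhat :=
  h.1.continuous.integrable_of_hasCompactSupport (psihat_hcs h)

lemma integrand_integrable {ψhat : ℝ → ℝ} (h : IsPsiHat ψhat) (x : ℝ) :
    Integrable (fun ξ => ψhat ξ * Real.cos (x * ξ)) := by
  refine Integrable.mono (psihat_integrable h)
    ((h.1.continuous.mul (by fun_prop)).aestronglyMeasurable) ?_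
  filter_upwards with ξ
  rw [Real.norm_eq_abs, Real.norm_eq_abs, abs_mul, abs_of_nonneg (h.2.2.1 ξ)]
  calc ψhat ξ * |Real.cos (x * ξ)| ≤ ψhat ξ * 1 :=
        mul_le_mul_of_nonneg_left (Real.abs_cos_le_one _) (h.2.2.1 ξ)
    _ = ψhat ξ := mul_one _

lemma psi_continuous {ψhat : ℝ → ℝ} (h : IsPsiHat ψhat) : Continuous (psi ψhat) := by
  unfold psi
  refine Continuous.mul continuous_const ?_
  refine MeasureTheory.continuous_of_dominated
    (F := fun x ξ => ψhat ξ * Real.cos (x * ξ)) (bound := ψhat)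
    (fun x => (integrand_integrable h x).aestronglyMeasurable) ?_
    (psihat_integrable h) ?_
  · intro x
    filter_upwards with ξ
    rw [Real.norm_eq_abs, abs_mul, abs_of_nonneg (h.2.2.1 ξ)]
    calc ψhat ξ * |Real.cos (x * ξ)| ≤ ψhat ξ * 1 :=
          mul_le_mul_of_nonneg_left (Real.abs_cos_le_one _) (h.2.2.1 ξ)
      _ = ψhat ξ := mul_one _
  · filter_upwards with ξ
    fun_prop

lemma psi_lower {ψhat : ℝ → ℝ} (h : IsPsiHat ψhat) {x : ℝ} (hx : |x| ≤ 1/2) :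
    (1 / (2*π)) * (Real.cos (1/4) * (1/2)) ≤ psi ψhat x := by
  unfold psi
  have hπ : (0:ℝ) < π := Real.pi_pos
  refine mul_le_mul_of_nonneg_left ?_ (by positivity)
  -- lower bound integral by the indicator of [-1/4, 1/4] times cos(1/4)
  have hind : Integrable ((Set.Icc (-(1/4):ℝ) (1/4)).indicator fun _ => Real.cos (1/4)) := by
    exact (integrable_indicator_iff measurableSet_Icc).2
      (integrableOn_const (by simp [Real.volume_Icc]))
  have hmono : ∀ ξ : ℝ, (Set.Icc (-(1/4):ℝ) (1/4)).indicator (fun _ => Real.cos (1/4)) ξ ≤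
      ψhat ξ * Real.cos (x * ξ) := by
    intro ξ
    by_cases hξ : ξ ∈ Set.Icc (-(1/4):ℝ) (1/4)
    · rw [Set.indicator_of_mem hξ]
      have hξ4 : |ξ| ≤ 1/4 := abs_le.2 ⟨hξ.1, hξ.2⟩
      rw [h.2.2.2.2.2 ξ hξ4, one_mul]
      have hxa : |x * ξ| ≤ 1/4 := by
        rw [abs_mul]
        calc |x| * |ξ| ≤ (1/2) * (1/4) := by
              exact mul_le_mul hx hξ4 (abs_nonneg _) (by norm_num)
          _ ≤ 1/4 := by norm_num
      rw [← Real.cos_abs (x * ξ)]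
      exact Real.cos_le_cos_of_nonneg_of_le_pi (abs_nonneg _)
        (by nlinarith [Real.pi_gt_three]) hxa
    · rw [Set.indicator_of_notMem hξ]
      by_cases hξ2 : |ξ| ≤ 1/2
      · refine mul_nonneg (h.2.2.1 ξ) (Real.cos_nonneg_of_mem_Icc ⟨?_, ?_⟩)
        · nlinarith [abs_le.1 (show |x*ξ| ≤ 1/4 by
            rw [abs_mul]; nlinarith [abs_nonneg x, abs_nonneg ξ]), Real.pi_gt_three]
        · nlinarith [abs_le.1 (show |x*ξ| ≤ 1/4 by
            rw [abs_mul]; nlinarith [abs_nonneg x, abs_nonneg ξ]), Real.pi_gt_three]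
      · rw [h.2.2.2.2.1 ξ (by linarith [not_le.1 hξ2]), zero_mul]
  calc Real.cos (1/4) * (1/2)
      = ∫ ξ, (Set.Icc (-(1/4):ℝ) (1/4)).indicator (fun _ => Real.cos (1/4)) ξ := by
        rw [MeasureTheory.integral_indicator_const _ measurableSet_Icc]
        simp [Real.volume_Icc]
        norm_num
        ring
    _ ≤ ∫ ξ, ψhat ξ * Real.cos (x * ξ) :=
        integral_mono hind (integrand_integrable h x) hmono

lemma cos_sq_integral {lam : ℝ} (hlam : 2 ≤ lam) :
    (1/4 : ℝ) ≤ ∫ x in (-(1/2):ℝ)..(1/2), Real.cos (lam * x) ^ 2 := by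
  have hl0 : (0:ℝ) < lam := by linarith
  have key : ∀ x : ℝ, HasDerivAt (fun y => y/2 + Real.sin (2*lam*y) / (4*lam))
      (Real.cos (lam * x) ^ 2) x := by
    intro x
    have h1 : HasDerivAt (fun y : ℝ => y/2) (1/2) x := (hasDerivAt_id x).div_const 2
    have h2 : HasDerivAt (fun y : ℝ => 2*lam*y) (2*lam) x := by
      simpa using (hasDerivAt_id x).const_mul (2*lam)
    have h3 : HasDerivAt (fun y : ℝ => Real.sin (2*lam*y))
        (Real.cos (2*lam*x) * (2*lam)) x := (Real.hasDerivAt_sin (2*lam*x)).comp x h2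
    have h4 := h1.add (h3.div_const (4*lam))
    refine h4.congr_deriv ?_
    symm
    rw [Real.cos_sq]
    have : 2 * (lam * x) = 2 * lam * x := by ring
    rw [this]
    field_simp
    ring
  rw [intervalIntegral.integral_eq_sub_of_hasDerivAt (fun x _ => key x)
    (Continuous.intervalIntegrable (by fun_prop) _ _)]
  have h5 : 2 * lam * (1/2) = lam := by ring
  have h6 : 2 * lam * (-(1/2)) = -lam := by ring
  rw [h5, h6, Real.sin_neg, neg_div]
  have hs : -1 ≤ Real.sin lam := Real.neg_one_le_sin lam
  have h8 : -(1/8 : ℝ) ≤ Real.sin lam / (4*lam) := by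
    rw [le_div_iff₀ (by positivity)]
    nlinarith
  have h9 : -Real.sin lam/(4*lam) = -(Real.sin lam/(4*lam)) := neg_div _ _
  rw [h9]
  linarith

/-- For every `a ∈ [1,∞]` there is a constant `A > 0` such that
`liminf_{n→∞} ‖ψ²(·) cos((33/24)·2ⁿ ·)‖_{L^a(ℝ)} ≥ A`. -/
theorem liminf_cos_lower_bound (ψhat : ℝ → ℝ) (h : IsPsiHat ψhat)
    (a : ℝ≥0∞) (ha : 1 ≤ a) :
    ∃ A : ℝ, 0 < A ∧
      ENNReal.ofReal A ≤
        Filter.liminf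
          (fun n : ℕ =>
            eLpNorm (fun x : ℝ => (psi ψhat x) ^ 2 * Real.cos ((33 / 24) * 2 ^ n * x))
              a volume)
          Filter.atTop := by
  have hπ : (0:ℝ) < π := Real.pi_pos
  set c : ℝ := (1 / (2*π)) * (Real.cos (1/4) * (1/2)) with hc_def
  have hcos : (0:ℝ) < Real.cos (1/4) :=
    Real.cos_pos_of_mem_Ioo ⟨by nlinarith [Real.pi_gt_three], by nlinarith [Real.pi_gt_three]⟩
  have hcpos : 0 < c := by rw [hc_def]; positivity
  refine ⟨c^2/4, by positivity, ?_⟩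
  refine le_liminf_of_le (by isBoundedDefault) ?_
  filter_upwards [eventually_ge_atTop 1] with n hn
  set lam : ℝ := (33/24) * 2^n with hlam_def
  have hlam : 2 ≤ lam := by
    have h2n : (2:ℝ) ≤ 2^n := by
      calc (2:ℝ) = 2^1 := (pow_one 2).symm
        _ ≤ 2^n := pow_le_pow_right₀ one_le_two hn
    rw [hlam_def]; nlinarith
  set f : ℝ → ℝ := fun x => (psi ψhat x)^2 * Real.cos (lam * x) with hf_def
  have hfc : Continuous f := by
    rw [hf_def]
    exact ((psi_continuous h).pow 2).mul (Real.continuous_cos.comp (by fun_prop))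
  set S : Set ℝ := Set.Icc (-(1/2):ℝ) (1/2) with hS_def
  have hμS : volume S = 1 := by rw [hS_def, Real.volume_Icc]; norm_num
  have step1 : ENNReal.ofReal (c^2/4) ≤ eLpNorm f 1 (volume.restrict S) := by
    rw [eLpNorm_one_eq_lintegral_enorm]
    have hint : IntegrableOn (fun x => c^2 * Real.cos (lam*x)^2) S volume :=
      Continuous.integrableOn_Icc (by fun_prop)
    calc ENNReal.ofReal (c^2/4)
        ≤ ENNReal.ofReal (∫ x in S, c^2 * Real.cos (lam*x)^2) := by
          apply ENNReal.ofReal_le_ofReal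
          have heq : ∫ x in S, c^2 * Real.cos (lam*x)^2
              = c^2 * ∫ x in (-(1/2):ℝ)..(1/2), Real.cos (lam*x)^2 := by
            rw [hS_def, MeasureTheory.integral_Icc_eq_integral_Ioc,
              ← intervalIntegral.integral_of_le (by norm_num : (-(1/2):ℝ) ≤ 1/2),
              intervalIntegral.integral_const_mul]
          rw [heq]
          nlinarith [cos_sq_integral hlam, sq_nonneg c]
      _ = ∫⁻ x in S, ENNReal.ofReal (c^2 * Real.cos (lam*x)^2) :=
          ofReal_integral_eq_lintegral_ofReal hint
            (Filter.Eventually.of_forall fun x => by positivity)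
      _ ≤ ∫⁻ x in S, ‖f x‖ₑ := by
          refine setLIntegral_mono (hfc.measurable.enorm) ?_
          intro x hx
          rw [Real.enorm_eq_ofReal_abs]
          apply ENNReal.ofReal_le_ofReal
          have hax : |x| ≤ 1/2 := abs_le.2 ⟨hx.1, hx.2⟩
          have hψ : c ≤ psi ψhat x := psi_lower h hax
          have hψ2 : c^2 ≤ (psi ψhat x)^2 := pow_le_pow_left₀ hcpos.le hψ 2
          have habs : |f x| = (psi ψhat x)^2 * |Real.cos (lam*x)| := by
            rw [hf_def, abs_mul, abs_of_nonneg (sq_nonneg _)]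
          rw [habs]
          have hcos2 : Real.cos (lam*x)^2 ≤ |Real.cos (lam*x)| := by
            nlinarith [Real.abs_cos_le_one (lam*x), abs_nonneg (Real.cos (lam*x)),
              sq_abs (Real.cos (lam*x))]
          calc c^2 * Real.cos (lam*x)^2 ≤ (psi ψhat x)^2 * Real.cos (lam*x)^2 :=
                mul_le_mul_of_nonneg_right hψ2 (sq_nonneg _)
            _ ≤ (psi ψhat x)^2 * |Real.cos (lam*x)| :=
                mul_le_mul_of_nonneg_left hcos2 (sq_nonneg _)
  have step2 : eLpNorm f 1 (volume.restrict S) ≤ eLpNorm f a (volume.restrict S) := by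
    have := eLpNorm_le_eLpNorm_mul_rpow_measure_univ (p := 1) (q := a) ha
      (hfc.aestronglyMeasurable (μ := volume.restrict S))
    simpa [Measure.restrict_apply_univ, hμS] using this
  have step3 : eLpNorm f a (volume.restrict S) ≤ eLpNorm f a volume :=
    eLpNorm_mono_measure f Measure.restrict_le_self
  exact step1.trans (step2.trans step3)
end

section
/- Let s ∈ ℝ and 1 ≤ p ≤ ∞. For n ≥ 1 set v₀ⁿ(x) = (24/33)·2^{-n} ψ(x) and w₀ⁿ(x) = 2^{-ns} ψ(x) sin((33/24)·2ⁿ x). Then there exists a constant Ã > 0 such that liminf_{n→∞} 2^{ns} ‖v₀ⁿ · ∂ₓw₀ⁿ‖_{L^p(ℝ)} ≥ Ã. -/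
open MeasureTheory Filter Real
open scoped ENNReal

namespace LAux
variable {ψhat : ℝ → ℝ}

noncomputable def psi' (ψhat : ℝ → ℝ) : ℝ → ℝ :=
  fun x => (1 / (2 * π)) * ∫ ξ : ℝ, -(ψhat ξ * (ξ * Real.sin (x * ξ)))

lemma supp0 (h : IsPsiHat ψhat) : ∀ ξ ∉ Set.Icc (-(1/2) : ℝ) (1/2), ψhat ξ = 0 := by
  intro ξ hξ
  apply h.2.2.2.2.1
  rw [Set.mem_Icc, not_and_or, not_le, not_le] at hξ
  rcases hξ with h1 | h1
  · exact lt_abs.mpr (Or.inr (by linarith))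
  · exact lt_abs.mpr (Or.inl h1)

lemma cont_psihat (h : IsPsiHat ψhat) : Continuous ψhat := h.1.continuous

lemma hcs (h : IsPsiHat ψhat) : HasCompactSupport ψhat :=
  HasCompactSupport.intro isCompact_Icc (supp0 h)

lemma integrable_psihat (h : IsPsiHat ψhat) : Integrable ψhat :=
  (cont_psihat h).integrable_of_hasCompactSupport (hcs h)

lemma integrable_bound (h : IsPsiHat ψhat) :
    Integrable (fun ξ : ℝ => |ψhat ξ * ξ|) := by
  apply Continuous.integrable_of_hasCompactSupport
  · exact ((cont_psihat h).mul continuous_id).abs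
  · exact HasCompactSupport.intro (isCompact_Icc (a := -(1/2:ℝ)) (b := 1/2))
      (fun ξ hξ => by simp [supp0 h ξ hξ])

lemma integrable_Fx (h : IsPsiHat ψhat) (x : ℝ) :
    Integrable (fun ξ : ℝ => ψhat ξ * Real.cos (x * ξ)) := by
  apply Continuous.integrable_of_hasCompactSupport
  · exact (cont_psihat h).mul (Real.continuous_cos.comp (continuous_const.mul continuous_id))
  · exact HasCompactSupport.intro (isCompact_Icc (a := -(1/2:ℝ)) (b := 1/2))
      (fun ξ hξ => by simp [supp0 h ξ hξ])

lemma integrable_F'x (h : IsPsiHat ψhat) (x : ℝ) :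
    Integrable (fun ξ : ℝ => -(ψhat ξ * (ξ * Real.sin (x * ξ)))) := by
  apply Continuous.integrable_of_hasCompactSupport
  · exact ((cont_psihat h).mul (continuous_id.mul
      (Real.continuous_sin.comp (continuous_const.mul continuous_id)))).neg
  · exact HasCompactSupport.intro (isCompact_Icc (a := -(1/2:ℝ)) (b := 1/2))
      (fun ξ hξ => by simp [supp0 h ξ hξ])

lemma bnd (x ξ : ℝ) : ‖-(ψhat ξ * (ξ * Real.sin (x * ξ)))‖ ≤ |ψhat ξ * ξ| := by
  rw [norm_neg, Real.norm_eq_abs, abs_mul, abs_mul, abs_mul]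
  calc |ψhat ξ| * (|ξ| * |Real.sin (x * ξ)|) ≤ |ψhat ξ| * (|ξ| * 1) := by
        gcongr; exact abs_sin_le_one _
    _ = |ψhat ξ| * |ξ| := by ring

lemma hasDerivAt_psi (h : IsPsiHat ψhat) (x₀ : ℝ) :
    HasDerivAt (psi ψhat) (psi' ψhat x₀) x₀ := by
  have key := hasDerivAt_integral_of_dominated_loc_of_deriv_le
    (F := fun x ξ => ψhat ξ * Real.cos (x * ξ))
    (F' := fun x ξ => -(ψhat ξ * (ξ * Real.sin (x * ξ))))
    (bound := fun ξ => |ψhat ξ * ξ|) (μ := volume) (x₀ := x₀) (s := Metric.ball x₀ 1) (Metric.ball_mem_nhds x₀ one_pos)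
    (Filter.Eventually.of_forall fun x => (integrable_Fx h x).aestronglyMeasurable)
    (integrable_Fx h x₀)
    (integrable_F'x h x₀).aestronglyMeasurable
    (Filter.Eventually.of_forall fun ξ => ?_)
    (integrable_bound h)
    (Filter.Eventually.of_forall fun ξ => ?_)
  · exact (key.2.const_mul (1 / (2 * π)))
  · exact fun x _ => bnd x ξ
  · intro x _
    have h1 : HasDerivAt (fun x : ℝ => x * ξ) ξ x := by
      simpa using (hasDerivAt_id x).mul_const ξ
    have h2 := (Real.hasDerivAt_cos (x * ξ)).comp x h1
    have h3 := h2.const_mul (ψhat ξ)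
    exact h3.congr_deriv (by ring)

lemma continuous_psi (h : IsPsiHat ψhat) : Continuous (psi ψhat) := by
  have : Differentiable ℝ (psi ψhat) := fun x => (hasDerivAt_psi h x).differentiableAt
  exact this.continuous

lemma continuous_psi' (h : IsPsiHat ψhat) : Continuous (psi' ψhat) := by
  apply Continuous.mul continuous_const
  apply continuous_of_dominated (bound := fun ξ => |ψhat ξ * ξ|)
  · exact fun x => (integrable_F'x h x).aestronglyMeasurable
  · exact fun x => Filter.Eventually.of_forall fun ξ => bnd x ξ
  · exact integrable_bound h
  · refine Filter.Eventually.of_forall fun ξ => ?_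
    exact (continuous_const.mul (continuous_const.mul
      (Real.continuous_sin.comp (continuous_id.mul continuous_const)))).neg

end LAux

namespace LAux
variable {ψhat : ℝ → ℝ}

lemma integral_le_of_le_indicator {f : ℝ → ℝ} (hf : Integrable f) {C : ℝ}
    (hle : ∀ ξ, |f ξ| ≤ Set.indicator (Set.Icc (-(1/2) : ℝ) (1/2)) (fun _ => C) ξ) :
    |∫ ξ, f ξ| ≤ C := by
  have hind : Integrable (Set.indicator (Set.Icc (-(1/2) : ℝ) (1/2)) (fun _ => C)) := by
    refine IntegrableOn.integrable_indicator ?_ measurableSet_Icc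
    exact integrableOn_const (by simp [Real.volume_Icc])
  calc |∫ ξ, f ξ| ≤ ∫ ξ, |f ξ| := by
        simpa using norm_integral_le_integral_norm f
    _ ≤ ∫ ξ, Set.indicator (Set.Icc (-(1/2) : ℝ) (1/2)) (fun _ => C) ξ :=
        integral_mono hf.abs hind hle
    _ = C := by
        rw [integral_indicator_const _ measurableSet_Icc]
        simp [Real.volume_Icc]
        norm_num

lemma psihat_abs_le (h : IsPsiHat ψhat) (ξ : ℝ) : |ψhat ξ| ≤ 1 :=
  abs_le.mpr ⟨by linarith [h.2.2.1 ξ], h.2.2.2.1 ξ⟩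

lemma abs_psi_le (h : IsPsiHat ψhat) (x : ℝ) : |psi ψhat x| ≤ 1 / (2 * π) := by
  have h1 : |∫ ξ, ψhat ξ * Real.cos (x * ξ)| ≤ 1 := by
    apply integral_le_of_le_indicator (integrable_Fx h x)
    intro ξ
    by_cases hξ : ξ ∈ Set.Icc (-(1/2) : ℝ) (1/2)
    · rw [Set.indicator_of_mem hξ, abs_mul]
      calc |ψhat ξ| * |Real.cos (x * ξ)| ≤ 1 * 1 :=
            mul_le_mul (psihat_abs_le h ξ) (Real.abs_cos_le_one _) (abs_nonneg _) zero_le_one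
        _ = 1 := one_mul 1
    · rw [Set.indicator_of_notMem hξ, supp0 h ξ hξ]; simp
  have hc : (0:ℝ) < 1 / (2 * π) := by positivity
  calc |psi ψhat x| = (1 / (2 * π)) * |∫ ξ, ψhat ξ * Real.cos (x * ξ)| := by
        rw [psi, abs_mul, abs_of_pos hc]
    _ ≤ (1 / (2 * π)) * 1 := by gcongr
    _ = 1 / (2 * π) := mul_one _

lemma abs_psi'_le (h : IsPsiHat ψhat) (x : ℝ) : |psi' ψhat x| ≤ 1 / (4 * π) := by
  have h1 : |∫ ξ, -(ψhat ξ * (ξ * Real.sin (x * ξ)))| ≤ 1/2 := by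
    apply integral_le_of_le_indicator (integrable_F'x h x)
    intro ξ
    by_cases hξ : ξ ∈ Set.Icc (-(1/2) : ℝ) (1/2)
    · rw [Set.indicator_of_mem hξ, abs_neg, abs_mul, abs_mul]
      have hξ2 : |ξ| ≤ 1/2 := abs_le.mpr ⟨(Set.mem_Icc.mp hξ).1, (Set.mem_Icc.mp hξ).2⟩
      calc |ψhat ξ| * (|ξ| * |Real.sin (x * ξ)|) ≤ 1 * (1/2 * 1) :=
            mul_le_mul (psihat_abs_le h ξ)
              (mul_le_mul hξ2 (Real.abs_sin_le_one _) (abs_nonneg _) (by norm_num))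
              (by positivity) zero_le_one
        _ = 1/2 := by norm_num
    · rw [Set.indicator_of_notMem hξ, supp0 h ξ hξ]; simp
  have hc : (0:ℝ) < 1 / (2 * π) := by positivity
  calc |psi' ψhat x| = (1 / (2 * π)) * |∫ ξ, -(ψhat ξ * (ξ * Real.sin (x * ξ)))| := by
        rw [psi', abs_mul, abs_of_pos hc]
    _ ≤ (1 / (2 * π)) * (1/2) := by gcongr
    _ = 1 / (4 * π) := by ring

lemma psi_zero_ge (h : IsPsiHat ψhat) : 1 / (4 * π) ≤ psi ψhat 0 := by
  have hind : Integrable (Set.indicator (Set.Icc (-(1/4) : ℝ) (1/4)) (fun _ => (1:ℝ))) := by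
    refine IntegrableOn.integrable_indicator ?_ measurableSet_Icc
    exact integrableOn_const (by simp [Real.volume_Icc])
  have h1 : (1/2 : ℝ) ≤ ∫ ξ, ψhat ξ := by
    calc (1/2 : ℝ) = ∫ ξ, Set.indicator (Set.Icc (-(1/4) : ℝ) (1/4)) (fun _ => (1:ℝ)) ξ := by
          rw [integral_indicator_const _ measurableSet_Icc]
          simp [Real.volume_Icc]
          norm_num
      _ ≤ ∫ ξ, ψhat ξ := by
          apply integral_mono hind (integrable_psihat h)
          intro ξ
          by_cases hξ : ξ ∈ Set.Icc (-(1/4) : ℝ) (1/4)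
          · rw [Set.indicator_of_mem hξ]
            exact (h.2.2.2.2.2 ξ (abs_le.mpr ⟨(Set.mem_Icc.mp hξ).1, (Set.mem_Icc.mp hξ).2⟩)).ge
          · rw [Set.indicator_of_notMem hξ]
            exact h.2.2.1 ξ
  have h2 : psi ψhat 0 = (1 / (2 * π)) * ∫ ξ, ψhat ξ := by
    rw [psi]
    congr 1
    apply integral_congr_ae
    filter_upwards with ξ
    simp
  rw [h2]
  have hc : (0:ℝ) < 1 / (2 * π) := by positivity
  calc 1 / (4 * π) = (1 / (2 * π)) * (1/2) := by ring
    _ ≤ (1 / (2 * π)) * ∫ ξ, ψhat ξ := by gcongr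
    _ = _ := rfl

lemma psi_lower (h : IsPsiHat ψhat) {x : ℝ} (hx : x ∈ Set.Icc (-(1/2) : ℝ) (1/2)) :
    1 / (8 * π) ≤ psi ψhat x := by
  have lip : ‖psi ψhat x - psi ψhat 0‖ ≤ (1 / (4 * π)) * ‖x - 0‖ := by
    apply Convex.norm_image_sub_le_of_norm_hasDerivWithin_le
      (f' := psi' ψhat) (s := Set.univ)
      (fun y _ => (hasDerivAt_psi h y).hasDerivWithinAt)
      (fun y _ => by rw [Real.norm_eq_abs]; exact abs_psi'_le h y)
      convex_univ (Set.mem_univ 0) (Set.mem_univ x)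
  rw [Real.norm_eq_abs, Real.norm_eq_abs, sub_zero] at lip
  have hx2 : |x| ≤ 1/2 := abs_le.mpr ⟨(Set.mem_Icc.mp hx).1, (Set.mem_Icc.mp hx).2⟩
  have hπ : (0:ℝ) < π := Real.pi_pos
  have h3 : |psi ψhat x - psi ψhat 0| ≤ 1 / (8 * π) := by
    calc |psi ψhat x - psi ψhat 0| ≤ (1 / (4 * π)) * |x| := lip
      _ ≤ (1 / (4 * π)) * (1/2) := by gcongr
      _ = 1 / (8 * π) := by ring
  have h4 := psi_zero_ge h
  have h5 := (abs_le.mp h3).1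
  have : 1/(4*π) - 1/(8*π) = 1/(8*π) := by field_simp; ring
  linarith

end LAux

/-- The high frequency function `w₀ⁿ(x) = 2^{-ns} ψ(x) sin((33/24)·2ⁿ x)`. -/
noncomputable def w0 (ψhat : ℝ → ℝ) (s : ℝ) (n : ℕ) : ℝ → ℝ :=
  fun x => (2 : ℝ) ^ (-(n : ℝ) * s) * psi ψhat x * Real.sin ((33 / 24) * 2 ^ n * x)

/-- The low frequency function `v₀ⁿ(x) = (24/33)·2^{-n} ψ(x)`. -/
noncomputable def v0 (ψhat : ℝ → ℝ) (n : ℕ) : ℝ → ℝ :=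
  fun x => (24 / 33) * (2 : ℝ) ^ (-(n : ℝ)) * psi ψhat x

namespace LAux
variable {ψhat : ℝ → ℝ}

noncomputable def g (ψhat : ℝ → ℝ) (n : ℕ) : ℝ → ℝ := fun x =>
  (24/33) * (2:ℝ) ^ (-(n:ℝ)) *
    (psi ψhat x * psi' ψhat x * Real.sin ((33/24) * 2^n * x)) +
  psi ψhat x ^ 2 * Real.cos ((33/24) * 2^n * x)

lemma continuous_g (h : IsPsiHat ψhat) (n : ℕ) : Continuous (g ψhat n) := by
  apply Continuous.add
  · exact continuous_const.mul (((continuous_psi h).mul (continuous_psi' h)).mul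
      (Real.continuous_sin.comp (continuous_const.mul continuous_id)))
  · exact ((continuous_psi h).pow 2).mul
      (Real.continuous_cos.comp (continuous_const.mul continuous_id))

lemma hasDerivAt_w0 (h : IsPsiHat ψhat) (s : ℝ) (n : ℕ) (x : ℝ) :
    HasDerivAt (w0 ψhat s n)
      ((2:ℝ) ^ (-(n:ℝ) * s) * psi' ψhat x * Real.sin ((33/24) * 2^n * x) +
       (2:ℝ) ^ (-(n:ℝ) * s) * psi ψhat x *
         (Real.cos ((33/24) * 2^n * x) * ((33/24) * 2^n))) x := by
  have h1 : HasDerivAt (fun x : ℝ => (2:ℝ) ^ (-(n:ℝ) * s) * psi ψhat x)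
      ((2:ℝ) ^ (-(n:ℝ) * s) * psi' ψhat x) x := (hasDerivAt_psi h x).const_mul _
  have h2 : HasDerivAt (fun x : ℝ => (33/24 : ℝ) * 2^n * x) ((33/24 : ℝ) * 2^n) x := by
    simpa using (hasDerivAt_id x).const_mul ((33/24 : ℝ) * 2^n)
  have h3 := (Real.hasDerivAt_sin ((33/24 : ℝ) * 2^n * x)).comp x h2
  have h4 := h1.mul h3
  convert h4 using 1
  all_goals rfl

lemma key_eq (h : IsPsiHat ψhat) (s : ℝ) (n : ℕ) (x : ℝ) :
    (2:ℝ) ^ ((n:ℝ) * s) * (v0 ψhat n x * deriv (w0 ψhat s n) x) = g ψhat n x := by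
  rw [(hasDerivAt_w0 h s n x).deriv]
  have e1 : (2:ℝ) ^ ((n:ℝ) * s) * (2:ℝ) ^ (-(n:ℝ) * s) = 1 := by
    rw [← Real.rpow_add (by norm_num : (0:ℝ) < 2)]
    norm_num
  have e2 : (2:ℝ) ^ (-(n:ℝ)) * (2:ℝ)^n = 1 := by
    rw [← Real.rpow_natCast 2 n, ← Real.rpow_add (by norm_num : (0:ℝ) < 2)]
    norm_num
  show (2:ℝ) ^ ((n:ℝ) * s) * ((24/33) * (2:ℝ) ^ (-(n:ℝ)) * psi ψhat x *
    ((2:ℝ) ^ (-(n:ℝ) * s) * psi' ψhat x * Real.sin ((33/24) * 2^n * x) +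
     (2:ℝ) ^ (-(n:ℝ) * s) * psi ψhat x *
       (Real.cos ((33/24) * 2^n * x) * ((33/24) * 2^n)))) = _
  rw [g]
  calc (2:ℝ) ^ ((n:ℝ) * s) * ((24/33) * (2:ℝ) ^ (-(n:ℝ)) * psi ψhat x *
      ((2:ℝ) ^ (-(n:ℝ) * s) * psi' ψhat x * Real.sin ((33/24) * 2^n * x) +
       (2:ℝ) ^ (-(n:ℝ) * s) * psi ψhat x *
         (Real.cos ((33/24) * 2^n * x) * ((33/24) * 2^n))))
      = ((2:ℝ) ^ ((n:ℝ) * s) * (2:ℝ) ^ (-(n:ℝ) * s)) *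
          ((24/33) * (2:ℝ) ^ (-(n:ℝ)) *
            (psi ψhat x * psi' ψhat x * Real.sin ((33/24) * 2^n * x))) +
        ((2:ℝ) ^ ((n:ℝ) * s) * (2:ℝ) ^ (-(n:ℝ) * s)) * ((2:ℝ) ^ (-(n:ℝ)) * (2:ℝ)^n) *
          (psi ψhat x ^ 2 * Real.cos ((33/24) * 2^n * x)) := by ring
    _ = _ := by rw [e1, e2]; ring

lemma int_cos_sq {b : ℝ} (hb : 0 < b) :
    1/2 - 1/(2*b) ≤ ∫ x in Set.Icc (-(1/2) : ℝ) (1/2), Real.cos (b*x)^2 := by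
  have hb' : b ≠ 0 := ne_of_gt hb
  have hcont : Continuous fun x : ℝ => Real.cos (b*x)^2 :=
    (Real.continuous_cos.comp (continuous_const.mul continuous_id)).pow 2
  have hderiv : ∀ x ∈ Set.uIcc (-(1/2) : ℝ) (1/2),
      HasDerivAt (fun x => x/2 + Real.sin (2*b*x)/(4*b)) (Real.cos (b*x)^2) x := by
    intro x _
    have h1 : HasDerivAt (fun x : ℝ => x/2) (1/2) x := (hasDerivAt_id x).div_const 2
    have h2 : HasDerivAt (fun x : ℝ => 2*b*x) (2*b) x := by
      simpa using (hasDerivAt_id x).const_mul (2*b)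
    have h3 := (Real.hasDerivAt_sin (2*b*x)).comp x h2
    have h5 := h1.add (h3.div_const (4*b))
    refine h5.congr_deriv ?_
    have hc2 : Real.cos (2*b*x) = 2 * Real.cos (b*x)^2 - 1 := by
      rw [show 2*b*x = 2*(b*x) by ring, Real.cos_two_mul]
    rw [hc2]
    field_simp
    ring
  have heq : ∫ x in (-(1/2) : ℝ)..(1/2), Real.cos (b*x)^2
      = ((1:ℝ)/2/2 + Real.sin (2*b*(1/2))/(4*b)) -
        ((-(1/2))/2 + Real.sin (2*b*(-(1/2)))/(4*b)) :=
    intervalIntegral.integral_eq_sub_of_hasDerivAt hderiv (hcont.intervalIntegrable _ _)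
  have hset : ∫ x in Set.Icc (-(1/2) : ℝ) (1/2), Real.cos (b*x)^2
      = ∫ x in (-(1/2) : ℝ)..(1/2), Real.cos (b*x)^2 := by
    rw [intervalIntegral.integral_of_le (by norm_num),
      MeasureTheory.integral_Icc_eq_integral_Ioc]
  rw [hset, heq]
  have h6 : Real.sin (2*b*(-(1/2))) = -Real.sin (2*b*(1/2)) := by
    rw [show 2*b*(-(1/2:ℝ)) = -(2*b*(1/2)) by ring, Real.sin_neg]
  rw [h6]
  have h7 : -1 ≤ Real.sin (2*b*(1/2)) := Real.neg_one_le_sin _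
  have h9 : ((1:ℝ)/2/2 + Real.sin (2*b*(1/2))/(4*b)) -
      ((-(1/2))/2 + -Real.sin (2*b*(1/2))/(4*b))
      = 1/2 + Real.sin (2*b*(1/2))/(2*b) := by field_simp; ring
  rw [h9]
  have h8 : (-1 : ℝ)/(2*b) ≤ Real.sin (2*b*(1/2))/(2*b) := by gcongr
  have h10 : (-1 : ℝ)/(2*b) = -(1/(2*b)) := by ring
  linarith [h8, h10 ▸ h8]

end LAux

namespace LAux
variable {ψhat : ℝ → ℝ}

lemma int_lower (h : IsPsiHat ψhat) (n : ℕ) (hn : (2:ℝ)^(-(n:ℝ)) ≤ 1/64) :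
    (1/(8*π))^2/8 ≤ ∫ x in Set.Icc (-(1/2) : ℝ) (1/2), |g ψhat n x| := by
  have hπ := Real.pi_pos
  set K : ℝ := 1/(8*π) with hK
  have hKpos : 0 < K := by positivity
  set b : ℝ := (33/24 : ℝ) * 2^n with hb
  have hbpos : 0 < b := by positivity
  set x2 : ℝ := (2:ℝ)^(-(n:ℝ)) with hx2
  have hx2pos : 0 < x2 := Real.rpow_pos_of_pos (by norm_num) _
  set errC : ℝ := (24/33) * (1/(2*π)) * (1/(4*π)) with herrC
  have hbx : b * x2 = 33/24 := by
    have e2 : (2:ℝ)^(-(n:ℝ)) * (2:ℝ)^n = 1 := by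
      rw [← Real.rpow_natCast 2 n, ← Real.rpow_add (by norm_num : (0:ℝ) < 2)]
      norm_num
    rw [hb, hx2]
    linear_combination (33/24 : ℝ) * e2
  have h1b : 1/(2*b) = (4/11) * x2 := by
    have hb0 : b ≠ 0 := ne_of_gt hbpos
    field_simp
    nlinarith [hbx]
  have hpt : ∀ x ∈ Set.Icc (-(1/2) : ℝ) (1/2),
      psi ψhat x ^ 2 * Real.cos (b*x)^2 - errC * x2 ≤ |g ψhat n x| := by
    intro x hx
    have hgx : g ψhat n x = (24/33) * x2 * (psi ψhat x * psi' ψhat x * Real.sin (b*x)) +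
        psi ψhat x ^ 2 * Real.cos (b*x) := rfl
    have t1 : |(24/33) * x2 * (psi ψhat x * psi' ψhat x * Real.sin (b*x))| ≤ errC * x2 := by
      rw [abs_mul, abs_mul, abs_mul, abs_mul]
      have e1 : |(24/33 : ℝ)| = 24/33 := by norm_num
      have e2 : |x2| = x2 := abs_of_pos hx2pos
      rw [e1, e2]
      calc 24/33 * x2 * (|psi ψhat x| * |psi' ψhat x| * |Real.sin (b*x)|)
          ≤ 24/33 * x2 * ((1/(2*π)) * (1/(4*π)) * 1) := by
            gcongr
            · exact abs_psi_le h x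
            · exact abs_psi'_le h x
            · exact Real.abs_sin_le_one _
        _ = errC * x2 := by rw [herrC]; ring
    have t2 : psi ψhat x ^ 2 * Real.cos (b*x)^2 ≤ |psi ψhat x ^ 2 * Real.cos (b*x)| := by
      rw [abs_mul, abs_of_nonneg (sq_nonneg _)]
      have hc2 : Real.cos (b*x)^2 ≤ |Real.cos (b*x)| := by
        nlinarith [Real.abs_cos_le_one (b*x), abs_nonneg (Real.cos (b*x)),
          sq_abs (Real.cos (b*x))]
      exact mul_le_mul_of_nonneg_left hc2 (sq_nonneg _)
    have t3 : |psi ψhat x ^ 2 * Real.cos (b*x)| -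
        |(24/33) * x2 * (psi ψhat x * psi' ψhat x * Real.sin (b*x))| ≤ |g ψhat n x| := by
      rw [hgx]
      have := abs_sub_abs_le_abs_sub (psi ψhat x ^ 2 * Real.cos (b*x))
        (-((24/33) * x2 * (psi ψhat x * psi' ψhat x * Real.sin (b*x))))
      rw [abs_neg, sub_neg_eq_add, add_comm] at this
      exact this
    linarith
  have hcontg := continuous_g h n
  have hcont1 : Continuous fun x : ℝ => psi ψhat x ^ 2 * Real.cos (b*x)^2 :=
    ((continuous_psi h).pow 2).mul
      ((Real.continuous_cos.comp (continuous_const.mul continuous_id)).pow 2)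
  have step1 : ∫ x in Set.Icc (-(1/2):ℝ) (1/2),
        (psi ψhat x ^2 * Real.cos (b*x)^2 - errC * x2)
      ≤ ∫ x in Set.Icc (-(1/2):ℝ) (1/2), |g ψhat n x| :=
    setIntegral_mono_on (hcont1.sub continuous_const).integrableOn_Icc
      hcontg.abs.integrableOn_Icc measurableSet_Icc hpt
  have hvol : (volume (Set.Icc (-(1/2):ℝ) (1/2))).toReal = 1 := by
    rw [Real.volume_Icc]
    norm_num
  have step2 : ∫ x in Set.Icc (-(1/2):ℝ) (1/2),
        (psi ψhat x ^2 * Real.cos (b*x)^2 - errC * x2)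
      = (∫ x in Set.Icc (-(1/2):ℝ) (1/2), psi ψhat x ^2 * Real.cos (b*x)^2) - errC * x2 := by
    rw [integral_sub hcont1.integrableOn_Icc
      (integrableOn_const (by simp [Real.volume_Icc]))]
    rw [setIntegral_const, measureReal_def, hvol, one_smul]
  have step3 : K^2 * ∫ x in Set.Icc (-(1/2):ℝ) (1/2), Real.cos (b*x)^2
      ≤ ∫ x in Set.Icc (-(1/2):ℝ) (1/2), psi ψhat x ^2 * Real.cos (b*x)^2 := by
    rw [← integral_const_mul]
    apply setIntegral_mono_on
      (continuous_const.mul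
        ((Real.continuous_cos.comp (continuous_const.mul continuous_id)).pow 2)).integrableOn_Icc
      hcont1.integrableOn_Icc measurableSet_Icc
    intro x hx
    have hl := psi_lower h hx
    have h2 : K^2 ≤ psi ψhat x ^2 := by nlinarith
    exact mul_le_mul_of_nonneg_right h2 (sq_nonneg _)
  have step4 := int_cos_sq hbpos
  have herr2 : errC = (64/11) * K^2 := by
    rw [herrC, hK]
    field_simp
    ring
  have hK2 : 0 < K^2 := by positivity
  have final : K^2/8 ≤ ∫ x in Set.Icc (-(1/2):ℝ) (1/2), |g ψhat n x| := by
    rw [step2] at step1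
    have h5 : K^2 * (1/2 - 1/(2*b)) ≤ K^2 * ∫ x in Set.Icc (-(1/2):ℝ) (1/2), Real.cos (b*x)^2 :=
      mul_le_mul_of_nonneg_left step4 (le_of_lt hK2)
    rw [h1b] at h5
    have h6 : K^2/8 ≤ K^2 * (1/2 - (4/11)*x2) - errC*x2 := by
      rw [herr2]
      nlinarith [mul_le_mul_of_nonneg_left hn (le_of_lt hK2)]
    linarith
  exact final

end LAux

open LAux in
/-- There is a constant `Ã > 0` such that
`liminf_{n→∞} 2^{ns} ‖v₀ⁿ ∂ₓw₀ⁿ‖_{L^p} ≥ Ã`. -/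
theorem liminf_v0_dx_w0 (ψhat : ℝ → ℝ) (h : IsPsiHat ψhat)
    (s : ℝ) (p : ℝ≥0∞) (hp : 1 ≤ p) :
    ∃ A : ℝ, 0 < A ∧
      ENNReal.ofReal A ≤
        Filter.liminf
          (fun n : ℕ =>
            ENNReal.ofReal ((2 : ℝ) ^ ((n : ℝ) * s)) *
              eLpNorm (fun x : ℝ => v0 ψhat n x * deriv (w0 ψhat s n) x) p volume)
          Filter.atTop := by
  have hπ := Real.pi_pos
  refine ⟨(1/(8*π))^2/8, by positivity, ?_⟩
  have hev : ∀ᶠ n : ℕ in atTop, (2:ℝ)^(-(n:ℝ)) ≤ 1/64 := by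
    have heq : (fun n : ℕ => (2:ℝ)^(-(n:ℝ))) = fun n : ℕ => (1/2 : ℝ)^n := by
      funext n
      rw [Real.rpow_neg (by norm_num), Real.rpow_natCast]
      simp [one_div, inv_pow]
    have ht : Filter.Tendsto (fun n : ℕ => (2:ℝ)^(-(n:ℝ))) atTop (nhds 0) := by
      rw [heq]
      exact tendsto_pow_atTop_nhds_zero_of_lt_one (by norm_num) (by norm_num)
    exact ht.eventually (eventually_le_nhds (by norm_num))
  haveI hprob : IsProbabilityMeasure (volume.restrict (Set.Icc (-(1/2):ℝ) (1/2))) := by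
    constructor
    rw [Measure.restrict_apply_univ, Real.volume_Icc]
    norm_num
  refine Filter.le_liminf_of_le (by isBoundedDefault) ?_
  filter_upwards [hev] with n hn
  set c : ℝ := (2:ℝ)^((n:ℝ)*s) with hc
  have hcpos : 0 < c := Real.rpow_pos_of_pos (by norm_num) _
  have hsmul : (c • fun x : ℝ => v0 ψhat n x * deriv (w0 ψhat s n) x) = LAux.g ψhat n := by
    funext x
    exact LAux.key_eq h s n x
  have hstep1 : ENNReal.ofReal c *
      eLpNorm (fun x : ℝ => v0 ψhat n x * deriv (w0 ψhat s n) x) p volume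
      = eLpNorm (LAux.g ψhat n) p volume := by
    rw [← hsmul, eLpNorm_const_smul]
    congr 1
    rw [← ofReal_norm, Real.norm_eq_abs, abs_of_pos hcpos]
  rw [hstep1]
  have hintE : Integrable (LAux.g ψhat n)
      (volume.restrict (Set.Icc (-(1/2):ℝ) (1/2))) :=
    (continuous_g h n).integrableOn_Icc
  calc ENNReal.ofReal ((1/(8*π))^2/8)
      ≤ ENNReal.ofReal (∫ x in Set.Icc (-(1/2):ℝ) (1/2), |LAux.g ψhat n x|) :=
        ENNReal.ofReal_le_ofReal (int_lower h n hn)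
    _ = ∫⁻ x, ‖LAux.g ψhat n x‖₊ ∂(volume.restrict (Set.Icc (-(1/2):ℝ) (1/2))) := by
        simp_rw [← enorm_eq_nnnorm]
        rw [← ofReal_integral_norm_eq_lintegral_enorm hintE]
        congr 1
    _ = eLpNorm (LAux.g ψhat n) 1 (volume.restrict (Set.Icc (-(1/2):ℝ) (1/2))) :=
        by rw [eLpNorm_one_eq_lintegral_enorm]; simp only [enorm_eq_nnnorm]
    _ ≤ eLpNorm (LAux.g ψhat n) p (volume.restrict (Set.Icc (-(1/2):ℝ) (1/2))) :=
        eLpNorm_le_eLpNorm_of_exponent_le hp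
          ((continuous_g h n).aestronglyMeasurable.restrict)
    _ ≤ eLpNorm (LAux.g ψhat n) p volume :=
        eLpNorm_mono_measure _ Measure.restrict_le_self
end

section
/- Let 1 ≤ p ≤ ∞ and let l ≥ 1 be an integer. Then there exists a constant c > 0 (depending on p and ψ but not on n) such that for all sufficiently large n, ‖ψ²(·) cos((33/24)·2^{ln} ·) cos((33/24)·)‖_{L^p(ℝ)} ≥ c. -/
open MeasureTheory Filter Real
open scoped ENNReal

lemma psi_zero_pos {ψhat : ℝ → ℝ} (h : IsPsiHat ψhat) : 0 < psi ψhat 0 := by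
  unfold psi
  have hint : (0:ℝ) < ∫ ξ : ℝ, ψhat ξ := by
    have h1 : ∫ ξ in Set.Icc (-(1/4):ℝ) (1/4), ψhat ξ = 1/2 := by
      rw [setIntegral_congr_fun (measurableSet_Icc) (g := fun _ => (1:ℝ))]
      · simp [Real.volume_Icc]; norm_num
      · intro ξ hξ
        apply h.2.2.2.2.2
        rw [Set.mem_Icc] at hξ
        rw [abs_le]; constructor <;> linarith [hξ.1, hξ.2]
    have h2 : ∫ ξ in Set.Icc (-(1/4):ℝ) (1/4), ψhat ξ ≤ ∫ ξ : ℝ, ψhat ξ :=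
      setIntegral_le_integral (psihat_integrable h) (by filter_upwards with ξ using h.2.2.1 ξ)
    linarith
  have hpos : (0:ℝ) < 1 / (2 * π) := by positivity
  have he : (fun ξ => ψhat ξ * Real.cos (0 * ξ)) = ψhat := by
    funext ξ; simp
  rw [he]
  positivity

lemma cos_sq_integral_lb {δ N : ℝ} (hδ : 0 < δ) (hN : 2/δ ≤ N) :
    δ/2 ≤ ∫ x in Set.Icc (-δ) δ, Real.cos (N*x)^2 := by
  have hN0 : 0 < N := lt_of_lt_of_le (by positivity) hN
  have hNδ : 2 ≤ N * δ := by rw [div_le_iff₀ hδ] at hN; linarith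
  have h1 : ∫ x in Set.Icc (-δ) δ, Real.cos (N*x)^2 = ∫ x in (-δ)..δ, Real.cos (N*x)^2 := by
    rw [intervalIntegral.integral_of_le (by linarith), integral_Icc_eq_integral_Ioc]
  rw [h1, intervalIntegral.integral_comp_mul_left (fun x => Real.cos x ^ 2) hN0.ne',
    integral_cos_sq, smul_eq_mul]
  simp only [mul_neg, Real.cos_neg, Real.sin_neg, mul_comm]
  have hcs : -1 ≤ Real.cos (δ*N) * Real.sin (δ*N) := by
    nlinarith [sq_nonneg (Real.cos (δ*N) + Real.sin (δ*N)), Real.sin_sq_add_cos_sq (δ*N)]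
  rw [inv_mul_eq_div, le_div_iff₀ hN0]
  nlinarith [hcs]

/-- For `1 ≤ p ≤ ∞` and an integer `l ≥ 1` there is a constant `c > 0`, independent of `n`,
such that for all sufficiently large `n`,
`‖ψ² cos((33/24)·2^{ln}·) cos((33/24)·)‖_{L^p} ≥ c`. -/
theorem psi_sq_double_cos_lower_bound (ψhat : ℝ → ℝ) (h : IsPsiHat ψhat)
    (p : ℝ≥0∞) (hp : 1 ≤ p) (l : ℕ) (hl : 1 ≤ l) :
    ∃ c : ℝ, 0 < c ∧ ∀ᶠ n : ℕ in Filter.atTop,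
      ENNReal.ofReal c ≤
        eLpNorm
          (fun x : ℝ =>
            (psi ψhat x) ^ 2 * Real.cos ((33 / 24) * 2 ^ (l * n) * x) *
              Real.cos ((33 / 24) * x))
          p volume := by
  have hψc := psi_continuous h
  have hψ0 := psi_zero_pos h
  set g : ℝ → ℝ := fun x => (psi ψhat x)^2 * Real.cos ((33/24) * x)^2 with hg
  have hgc : Continuous g :=
    (hψc.pow 2).mul ((Real.continuous_cos.comp (continuous_const.mul continuous_id)).pow 2)
  have hg0 : 0 < g 0 := by
    simp only [hg, mul_zero, Real.cos_zero, one_pow, mul_one]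
    positivity
  have hev : ∀ᶠ x in nhds (0:ℝ), g 0 / 2 < g x :=
    hgc.continuousAt.eventually (eventually_gt_nhds (half_lt_self hg0))
  obtain ⟨ε, hε, hball⟩ := Metric.eventually_nhds_iff.mp hev
  set δ : ℝ := ε / 2 with hδdef
  have hδ : 0 < δ := by positivity
  set I : Set ℝ := Set.Icc (-δ) δ with hI
  have hIg : ∀ x ∈ I, g 0 / 2 ≤ g x := by
    intro x hx
    rw [Set.mem_Icc] at hx
    refine (hball ?_).le
    rw [Real.dist_eq, sub_zero, abs_lt]
    constructor <;> [linarith [hx.1]; linarith [hx.2]]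
  -- exponent
  set θ : ℝ := 1 - 1 / p.toReal with hθdef
  have hθ0 : 0 ≤ θ := by
    rcases eq_or_ne p ⊤ with hp' | hp'
    · simp [hθdef, hp']
    · have h1 : 1 ≤ p.toReal := by
        rw [← ENNReal.toReal_one]
        exact ENNReal.toReal_mono hp' hp
      have h2 : 1 / p.toReal ≤ 1 := by rw [div_le_one (by linarith)]; linarith
      rw [hθdef]
      exact sub_nonneg.mpr h2
  have hθ1 : θ ≤ 1 := by
    rw [hθdef]
    exact sub_le_self _ (by positivity)
  set B : ℝ≥0∞ := ENNReal.ofReal (2 * δ) with hB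
  have hBθ : B ^ θ ≤ ENNReal.ofReal (1 + 2 * δ) := by
    have hle : B ≤ ENNReal.ofReal (1 + 2 * δ) := ENNReal.ofReal_le_ofReal (by linarith)
    have h1le : (1:ℝ≥0∞) ≤ ENNReal.ofReal (1 + 2 * δ) :=
      ENNReal.one_le_ofReal.mpr (by linarith)
    rcases le_total B 1 with hB1 | hB1
    · exact le_trans (ENNReal.rpow_le_one hB1 hθ0) h1le
    · calc B ^ θ ≤ B ^ (1:ℝ) := ENNReal.rpow_le_rpow_of_exponent_le hB1 hθ1
        _ = B := ENNReal.rpow_one _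
        _ ≤ _ := hle
  have hBθ0 : B ^ θ ≠ 0 :=
    (ENNReal.rpow_pos (ENNReal.ofReal_pos.mpr (by linarith)) ENNReal.ofReal_ne_top).ne'
  have hBθtop : B ^ θ ≠ ⊤ := ENNReal.rpow_ne_top_of_nonneg hθ0 ENNReal.ofReal_ne_top
  set c : ℝ := (g 0 / 2 * (δ / 2)) / (1 + 2 * δ) with hc
  have hc0 : 0 < c := by positivity
  refine ⟨c, hc0, ?_⟩
  have hNbig : ∀ᶠ n : ℕ in atTop, 2 / δ ≤ (33/24 : ℝ) * 2 ^ (l * n) := by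
    filter_upwards [tendsto_natCast_atTop_atTop.eventually_ge_atTop (2 / δ)] with n hn
    calc (2:ℝ)/δ ≤ (n : ℝ) := hn
      _ ≤ (2:ℝ) ^ n := by
          exact_mod_cast (Nat.lt_two_pow_self (n := n)).le
      _ ≤ (2:ℝ) ^ (l * n) := by
          refine pow_le_pow_right₀ (by norm_num) ?_
          exact Nat.le_mul_of_pos_left n (by omega)
      _ ≤ (33/24 : ℝ) * 2 ^ (l * n) := by
          nlinarith [pow_pos (by norm_num : (0:ℝ) < 2) (l * n)]
  filter_upwards [hNbig] with n hn
  set N : ℝ := (33/24 : ℝ) * 2 ^ (l * n) with hNdef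
  have hN0 : 0 < N := lt_of_lt_of_le (by positivity) hn
  set f : ℝ → ℝ := fun x =>
    (psi ψhat x) ^ 2 * Real.cos (N * x) * Real.cos ((33/24) * x) with hf
  have hfc : Continuous f := by
    refine ((hψc.pow 2).mul ?_).mul ?_
    · exact Real.continuous_cos.comp (continuous_const.mul continuous_id)
    · exact Real.continuous_cos.comp (continuous_const.mul continuous_id)
  have hInt : IntegrableOn f I := hfc.integrableOn_Icc
  -- real side lower bound
  have hint1 : IntegrableOn (fun x => g 0 / 2 * Real.cos (N * x) ^ 2) I :=
    (continuous_const.mul ((Real.continuous_cos.comp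
      (continuous_const.mul continuous_id)).pow 2)).integrableOn_Icc
  have hint2 : IntegrableOn (fun x => g x * Real.cos (N * x) ^ 2) I :=
    (hgc.mul ((Real.continuous_cos.comp
      (continuous_const.mul continuous_id)).pow 2)).integrableOn_Icc
  have hint3 : IntegrableOn (fun x => ‖f x‖) I := hfc.norm.integrableOn_Icc
  have key : g 0 / 2 * (δ / 2) ≤ ∫ x in I, ‖f x‖ := by
    calc g 0 / 2 * (δ / 2) ≤ g 0 / 2 * ∫ x in I, Real.cos (N * x) ^ 2 :=
          mul_le_mul_of_nonneg_left (cos_sq_integral_lb hδ hn) (by positivity)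
      _ = ∫ x in I, g 0 / 2 * Real.cos (N * x) ^ 2 := (integral_const_mul _ _).symm
      _ ≤ ∫ x in I, g x * Real.cos (N * x) ^ 2 := by
          refine setIntegral_mono_on hint1 hint2 measurableSet_Icc ?_
          intro x hx
          exact mul_le_mul_of_nonneg_right (hIg x hx) (sq_nonneg _)
      _ ≤ ∫ x in I, ‖f x‖ := by
          refine setIntegral_mono_on hint2 hint3 measurableSet_Icc ?_
          intro x _
          have h1 : Real.cos (N * x) ^ 2 ≤ |Real.cos (N * x)| := by
            nlinarith [Real.abs_cos_le_one (N * x), abs_nonneg (Real.cos (N * x)),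
              sq_abs (Real.cos (N * x))]
          have h2 : Real.cos ((33/24) * x) ^ 2 ≤ |Real.cos ((33/24) * x)| := by
            nlinarith [Real.abs_cos_le_one ((33/24) * x), abs_nonneg (Real.cos ((33/24) * x)),
              sq_abs (Real.cos ((33/24) * x))]
          have hfeq : ‖f x‖ = (psi ψhat x) ^ 2 *
              (|Real.cos (N * x)| * |Real.cos ((33/24) * x)|) := by
            simp only [hf, Real.norm_eq_abs, abs_mul, abs_pow, sq_abs]
            ring
          rw [hfeq]
          simp only [hg]
          calc (psi ψhat x) ^ 2 * Real.cos ((33/24) * x) ^ 2 * Real.cos (N * x) ^ 2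
              = (psi ψhat x) ^ 2 * (Real.cos ((33/24) * x) ^ 2 * Real.cos (N * x) ^ 2) := by ring
            _ ≤ (psi ψhat x) ^ 2 * (|Real.cos (N * x)| * |Real.cos ((33/24) * x)|) := by
                refine mul_le_mul_of_nonneg_left ?_ (sq_nonneg _)
                calc Real.cos ((33/24) * x) ^ 2 * Real.cos (N * x) ^ 2
                    ≤ |Real.cos ((33/24) * x)| * |Real.cos (N * x)| :=
                      mul_le_mul h2 h1 (sq_nonneg _) (abs_nonneg _)
                  _ = |Real.cos (N * x)| * |Real.cos ((33/24) * x)| := mul_comm _ _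
  -- ENNReal chain
  have hμI : (volume.restrict I) Set.univ = B := by
    rw [Measure.restrict_apply_univ, hI, Real.volume_Icc, hB]
    congr 1; ring
  have step1 : ENNReal.ofReal (g 0 / 2 * (δ / 2)) ≤ eLpNorm f 1 (volume.restrict I) := by
    rw [eLpNorm_one_eq_lintegral_enorm, ← ofReal_integral_norm_eq_lintegral_enorm hInt]
    exact ENNReal.ofReal_le_ofReal key
  have step2 : eLpNorm f 1 (volume.restrict I) ≤ eLpNorm f p (volume.restrict I) * B ^ θ := by
    have h := eLpNorm_le_eLpNorm_mul_rpow_measure_univ (μ := volume.restrict I) hp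
      hfc.aestronglyMeasurable
    rw [hμI] at h
    simpa [hθdef] using h
  have step3 : eLpNorm f p (volume.restrict I) ≤ eLpNorm f p volume :=
    eLpNorm_mono_measure f Measure.restrict_le_self
  have hfinal : ENNReal.ofReal c * B ^ θ ≤ eLpNorm f p volume * B ^ θ := by
    calc ENNReal.ofReal c * B ^ θ ≤ ENNReal.ofReal c * ENNReal.ofReal (1 + 2 * δ) :=
          mul_le_mul_right hBθ _
      _ = ENNReal.ofReal (c * (1 + 2 * δ)) := (ENNReal.ofReal_mul hc0.le).symm
      _ = ENNReal.ofReal (g 0 / 2 * (δ / 2)) := by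
          congr 1
          rw [hc, div_mul_cancel₀]
          positivity
      _ ≤ eLpNorm f 1 (volume.restrict I) := step1
      _ ≤ eLpNorm f p (volume.restrict I) * B ^ θ := step2
      _ ≤ eLpNorm f p volume * B ^ θ := mul_le_mul_left step3 _
  have := (ENNReal.mul_le_mul_iff_left hBθ0 hBθtop).mp hfinal
  exact this
end
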